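/- arXiv:2206.07153 — 4 statements merged into one kernel-verified Lean document; each statement's English description precedes it below -/
import Mathlib

section
/- The mixed graph G on {0,1,2} × (Z/10), where each set V_i = {(i,j) : j} induces a directed 10-cycle (arcs (i,j) → (i,j+1)) and with edges {(0,j),(1,j)}, {(0,j),(2,j+5)}, {(1,j),(2,j+2)}, {(1,j),(2,j-2)} for all j ∈ Z/10, has no mixed cycle of length less than 6. -/
structure MixedGraph (V : Type) where
  Edge : V → V → Prop
  edge_symm : ∀ u w, Edge u w → Edge w u
  Arc : V → V → Prop

/-- A mixed cycle of length `k`: vertices `v 0, …, v (k-1)` (cyclically), where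
step `i` goes from `v i` to `v (i+1)`, labeled as an edge (`isEdge i = true`)
or an arc, with no repeated vertices and no repeated edges or arcs. -/
def MixedGraph.IsMixedCycle {V : Type} (G : MixedGraph V) (k : ℕ)
    (v : ZMod k → V) (isEdge : ZMod k → Bool) : Prop :=
  0 < k ∧ Function.Injective v ∧
  (∀ i, if isEdge i then G.Edge (v i) (v (i + 1)) else G.Arc (v i) (v (i + 1))) ∧
  (∀ i j, i ≠ j → isEdge i = true → isEdge j = true →
    ({v i, v (i + 1)} : Set V) ≠ {v j, v (j + 1)}) ∧
  (∀ i j, i ≠ j → isEdge i = false → isEdge j = false →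
    ¬(v i = v j ∧ v (i + 1) = v (j + 1)))

/-- Girth of a mixed graph is at least `g`. -/
def MixedGraph.GirthGE {V : Type} (G : MixedGraph V) (g : ℕ) : Prop :=
  ∀ k < g, ∀ (v : ZMod k → V) (isEdge : ZMod k → Bool), ¬ G.IsMixedCycle k v isEdge

abbrev MV : Type := Fin 3 × ZMod 10

def baseEdge (u w : MV) : Prop :=
  (∃ j : ZMod 10, u = (0, j) ∧ w = (1, j)) ∨
  (∃ j : ZMod 10, u = (0, j) ∧ w = (2, j + 5)) ∨
  (∃ j : ZMod 10, u = (1, j) ∧ w = (2, j + 2)) ∨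
  (∃ j : ZMod 10, u = (1, j) ∧ w = (2, j - 2))

def edgeRel (u w : MV) : Prop := baseEdge u w ∨ baseEdge w u

/-- Arcs `(i,j) → (i,j+1)`: each `V_i` induces a directed 10-cycle. -/
def arcRel (u w : MV) : Prop := w.1 = u.1 ∧ w.2 = u.2 + 1

def mixedG : MixedGraph MV where
  Edge := edgeRel
  edge_symm := fun _ _ h => h.symm
  Arc := arcRel

/-- Out-neighbours (via an arc or an edge) of a vertex. -/
def nbrs (u : MV) : List MV :=
  if u.1 = 0 then [(0, u.2+1), (1, u.2), (2, u.2+5)]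
  else if u.1 = 1 then [(1, u.2+1), (0, u.2), (2, u.2+2), (2, u.2-2)]
  else [(2, u.2+1), (0, u.2+5), (1, u.2-2), (1, u.2+2)]

lemma add55 (x : ZMod 10) : x + 5 + 5 = x := by
  have h : (5 + 5 : ZMod 10) = 0 := by decide
  rw [add_assoc, h, add_zero]

lemma mem_nbrs {u w : MV} (h : edgeRel u w ∨ arcRel u w) : w ∈ nbrs u := by
  rcases h with ((⟨j,rfl,rfl⟩|⟨j,rfl,rfl⟩|⟨j,rfl,rfl⟩|⟨j,rfl,rfl⟩)
    |(⟨j,rfl,rfl⟩|⟨j,rfl,rfl⟩|⟨j,rfl,rfl⟩|⟨j,rfl,rfl⟩))|⟨h1,h2⟩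
  · simp [nbrs]
  · simp [nbrs]
  · simp [nbrs]
  · simp [nbrs]
  · simp [nbrs]
  · simp [nbrs, add55]
  · simp [nbrs, add_sub_cancel_right]
  · simp [nbrs, sub_add_cancel]
  · have : w = (u.1, u.2 + 1) := Prod.ext h1 h2
    subst this
    obtain ⟨i, j⟩ := u
    fin_cases i <;> simp [nbrs]

lemma edge_fst {u w : MV} (h : edgeRel u w) : u.1 ≠ w.1 := by
  rcases h with (⟨j,rfl,rfl⟩|⟨j,rfl,rfl⟩|⟨j,rfl,rfl⟩|⟨j,rfl,rfl⟩)
    |(⟨j,rfl,rfl⟩|⟨j,rfl,rfl⟩|⟨j,rfl,rfl⟩|⟨j,rfl,rfl⟩) <;> simp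

lemma step_mem {u w : MV} {b : Bool}
    (h : if b then mixedG.Edge u w else mixedG.Arc u w) : w ∈ nbrs u := by
  cases b
  · exact mem_nbrs (Or.inr (by simp at h; exact h))
  · exact mem_nbrs (Or.inl (by simp at h; exact h))

lemma Lself : ∀ a : MV, a ∉ nbrs a := by decide

theorem L3 : ∀ a : MV, ∀ b ∈ nbrs a, ∀ c ∈ nbrs b, a ∈ nbrs c →
    a ≠ b → a ≠ c → b ≠ c → False := by decide

set_option maxHeartbeats 1000000 in
theorem L4 : ∀ a : MV, ∀ b ∈ nbrs a, ∀ c ∈ nbrs b, ∀ d ∈ nbrs c, a ∈ nbrs d →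
    a ≠ b → a ≠ c → a ≠ d → b ≠ c → b ≠ d → c ≠ d → False := by decide

set_option maxHeartbeats 4000000 in
set_option maxRecDepth 10000 in
set_option synthInstance.maxHeartbeats 2000000 in
set_option synthInstance.maxSize 2048 in
theorem L5 : ∀ a : MV, ∀ b ∈ nbrs a, ∀ c ∈ nbrs b, ∀ d ∈ nbrs c, ∀ e ∈ nbrs d, a ∈ nbrs e →
    a ≠ b → a ≠ c → a ≠ d → a ≠ e → b ≠ c → b ≠ d → b ≠ e → c ≠ d → c ≠ e → d ≠ e →
    False := by decide

theorem mixedG_girth_ge_six : mixedG.GirthGE 6 := by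
  intro k hk v isEdge h
  obtain ⟨hk0, hinj, hstep, hed, -⟩ := h
  interval_cases k
  · -- k = 1
    have h0 := hstep 0
    rw [show ((0 : ZMod 1) + 1) = 0 from by decide] at h0
    exact Lself _ (step_mem h0)
  · -- k = 2
    have h0 := hstep 0
    have h1 := hstep 1
    rw [show ((0 : ZMod 2) + 1) = 1 from by decide] at h0
    rw [show ((1 : ZMod 2) + 1) = 0 from by decide] at h1
    cases hb0 : isEdge 0 <;> cases hb1 : isEdge 1 <;>
      rw [hb0] at h0 <;> rw [hb1] at h1 <;> simp only [if_true, Bool.false_eq_true,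
        if_false] at h0 h1
    · -- both arcs
      obtain ⟨-, a0⟩ := h0
      obtain ⟨-, a1⟩ := h1
      rw [a0] at a1
      have hc : (v 0).2 + 0 = (v 0).2 + (1 + 1) := by
        rw [add_zero, ← add_assoc]; exact a1
      exact absurd (add_left_cancel hc) (by decide)
    · -- arc then edge
      exact edge_fst h1 h0.1
    · -- edge then arc
      exact edge_fst h0 h1.1
    · -- both edges
      have h2 := hed 0 1 (by decide) hb0 hb1
      rw [show ((0 : ZMod 2) + 1) = 1 from by decide,
        show ((1 : ZMod 2) + 1) = 0 from by decide] at h2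
      exact h2 (Set.pair_comm _ _)
  · -- k = 3
    have m01 : v 1 ∈ nbrs (v 0) := by
      have := hstep 0; rw [show ((0 : ZMod 3) + 1) = 1 from by decide] at this
      exact step_mem this
    have m12 : v 2 ∈ nbrs (v 1) := by
      have := hstep 1; rw [show ((1 : ZMod 3) + 1) = 2 from by decide] at this
      exact step_mem this
    have m20 : v 0 ∈ nbrs (v 2) := by
      have := hstep 2; rw [show ((2 : ZMod 3) + 1) = 0 from by decide] at this
      exact step_mem this
    exact L3 (v 0) (v 1) m01 (v 2) m12 m20
      (fun h => absurd (hinj h) (by decide))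
      (fun h => absurd (hinj h) (by decide))
      (fun h => absurd (hinj h) (by decide))
  · -- k = 4
    have m01 : v 1 ∈ nbrs (v 0) := by
      have := hstep 0; rw [show ((0 : ZMod 4) + 1) = 1 from by decide] at this
      exact step_mem this
    have m12 : v 2 ∈ nbrs (v 1) := by
      have := hstep 1; rw [show ((1 : ZMod 4) + 1) = 2 from by decide] at this
      exact step_mem this
    have m23 : v 3 ∈ nbrs (v 2) := by
      have := hstep 2; rw [show ((2 : ZMod 4) + 1) = 3 from by decide] at this
      exact step_mem this
    have m30 : v 0 ∈ nbrs (v 3) := by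
      have := hstep 3; rw [show ((3 : ZMod 4) + 1) = 0 from by decide] at this
      exact step_mem this
    exact L4 (v 0) (v 1) m01 (v 2) m12 (v 3) m23 m30
      (fun h => absurd (hinj h) (by decide))
      (fun h => absurd (hinj h) (by decide))
      (fun h => absurd (hinj h) (by decide))
      (fun h => absurd (hinj h) (by decide))
      (fun h => absurd (hinj h) (by decide))
      (fun h => absurd (hinj h) (by decide))
  · -- k = 5
    have m01 : v 1 ∈ nbrs (v 0) := by
      have := hstep 0; rw [show ((0 : ZMod 5) + 1) = 1 from by decide] at this
      exact step_mem this
    have m12 : v 2 ∈ nbrs (v 1) := by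
      have := hstep 1; rw [show ((1 : ZMod 5) + 1) = 2 from by decide] at this
      exact step_mem this
    have m23 : v 3 ∈ nbrs (v 2) := by
      have := hstep 2; rw [show ((2 : ZMod 5) + 1) = 3 from by decide] at this
      exact step_mem this
    have m34 : v 4 ∈ nbrs (v 3) := by
      have := hstep 3; rw [show ((3 : ZMod 5) + 1) = 4 from by decide] at this
      exact step_mem this
    have m40 : v 0 ∈ nbrs (v 4) := by
      have := hstep 4; rw [show ((4 : ZMod 5) + 1) = 0 from by decide] at this
      exact step_mem this
    exact L5 (v 0) (v 1) m01 (v 2) m12 (v 3) m23 (v 4) m34 m40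
      (fun h => absurd (hinj h) (by decide))
      (fun h => absurd (hinj h) (by decide))
      (fun h => absurd (hinj h) (by decide))
      (fun h => absurd (hinj h) (by decide))
      (fun h => absurd (hinj h) (by decide))
      (fun h => absurd (hinj h) (by decide))
      (fun h => absurd (hinj h) (by decide))
      (fun h => absurd (hinj h) (by decide))
      (fun h => absurd (hinj h) (by decide))
      (fun h => absurd (hinj h) (by decide))
end

section
/- In a mixed graph of girth at least 2d+2 in which every vertex has undirected degree at least r, if u and v are joined by an arc, then the balls of radius d around u and around v in the underlying undirected edge graph are disjoint trees, so the graph has at least 2·n(r,d) vertices where n(r,d) = 1 + r·∑_{k=0}^{d-1}(r-1)^k. -/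
/-- `edgeBall G d u w` : `w` is within distance `d` of `u` in the underlying
undirected edge graph of `G`. -/
def MixedGraph.edgeBall {V : Type} (G : MixedGraph V) : ℕ → V → V → Prop
  | 0, u, w => w = u
  | d + 1, u, w => w = u ∨ ∃ x, G.Edge u x ∧ G.edgeBall d x w

/-- Moore bound `n(r,d) = 1 + r·∑_{k<d} (r-1)^k`. -/
def mooreBound (r d : ℕ) : ℕ := 1 + r * ∑ k ∈ Finset.range d, (r - 1) ^ k


lemma mem_of_getLast?' {α : Type*} {l : List α} {a : α} (h : l.getLast? = some a) :
    a ∈ l := by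
  have hne : l ≠ [] := by rintro rfl; simp at h
  rw [List.getLast?_eq_getLast hne] at h
  exact (Option.some_injective _ h) ▸ List.getLast_mem hne

lemma eq_singleton_of_nodup {α : Type*} {l : List α} (hnd : l.Nodup) {a : α}
    (h1 : l.head? = some a) (h2 : l.getLast? = some a) : l = [a] := by
  match l with
  | [] => simp at h1
  | [b] => simp_all
  | b :: c :: t =>
    have hba : b = a := by simpa using h1
    rw [List.getLast?_cons_cons] at h2
    have : a ∈ c :: t := mem_of_getLast?' h2
    rw [List.nodup_cons] at hnd
    exact absurd (hba ▸ this) hnd.1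


namespace MixedGraph
variable {V : Type} (G : MixedGraph V)

lemma edgeBall_self : ∀ (k : ℕ) (u : V), G.edgeBall k u u
  | 0, _ => rfl
  | _+1, _ => Or.inl rfl

lemma edgeBall_mono {k : ℕ} {u w : V} (h : G.edgeBall k u w) : G.edgeBall (k+1) u w := by
  induction k generalizing u with
  | zero => exact Or.inl h
  | succ k ih =>
    rcases h with h | ⟨x, hx, hb⟩
    · exact Or.inl h
    · exact Or.inr ⟨x, hx, ih hb⟩

lemma edgeBall_le {k m : ℕ} (hkm : k ≤ m) {u w : V} (h : G.edgeBall k u w) :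
    G.edgeBall m u w := by
  induction hkm with
  | refl => exact h
  | step _ ih => exact G.edgeBall_mono ih

lemma edgeBall_succ_right {k : ℕ} {u w : V} :
    G.edgeBall (k+1) u w ↔ G.edgeBall k u w ∨ ∃ z, G.edgeBall k u z ∧ G.Edge z w := by
  induction k generalizing u with
  | zero =>
    show (w = u ∨ ∃ x, G.Edge u x ∧ G.edgeBall 0 x w) ↔ _
    constructor
    · rintro (h | ⟨x, hx, (h0 : w = x)⟩)
      · exact Or.inl h
      · exact Or.inr ⟨u, rfl, h0 ▸ hx⟩
    · rintro ((h : w = u) | ⟨z, (hz : z = u), hzw⟩)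
      · exact Or.inl h
      · exact Or.inr ⟨w, hz ▸ hzw, rfl⟩
  | succ k ih =>
    constructor
    · rintro ((h : w = u) | ⟨x, hux, hxw⟩)
      · cases h; exact Or.inl (G.edgeBall_self _ _)
      · rcases ih.mp hxw with h | ⟨z, hz, hzw⟩
        · exact Or.inl (Or.inr ⟨x, hux, h⟩)
        · exact Or.inr ⟨z, Or.inr ⟨x, hux, hz⟩, hzw⟩
    · rintro (h | ⟨z, hz, hzw⟩)
      · exact G.edgeBall_mono h
      · rcases hz with (hz : z = u) | ⟨x, hux, hxz⟩
        · exact Or.inr ⟨w, hz ▸ hzw, G.edgeBall_self _ w⟩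
        · exact Or.inr ⟨x, hux, ih.mpr (Or.inr ⟨z, hxz, hzw⟩)⟩

lemma edgeBall_of_edge {k : ℕ} {u z w : V} (hz : G.edgeBall k u z) (he : G.Edge z w) :
    G.edgeBall (k+1) u w :=
  G.edgeBall_succ_right.mpr (Or.inr ⟨z, hz, he⟩)

/-- extract a nodup path realizing ball membership -/
lemma exists_path {k : ℕ} {u w : V} (h : G.edgeBall k u w) :
    ∃ p : List V, p.Chain' G.Edge ∧ p.Nodup ∧ p.head? = some u ∧
      p.getLast? = some w ∧ p.length ≤ k + 1 := by
  induction k generalizing u with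
  | zero => exact ⟨[u], List.isChain_singleton u, by simp, rfl, by simp [h.symm], by simp⟩
  | succ k ih =>
    rcases h with (h : w = u) | ⟨x, hux, hxw⟩
    · exact ⟨[u], List.isChain_singleton u, by simp, rfl, by simp [h], by simp⟩
    · obtain ⟨p', hc, hnd, hh, hl, hlen⟩ := ih hxw
      by_cases hu : u ∈ p'
      · obtain ⟨s, t, rfl⟩ := List.append_of_mem hu
        refine ⟨u :: t, hc.suffix ⟨s, rfl⟩, ?_, rfl, ?_, ?_⟩
        · exact ((List.suffix_append s (u :: t)).sublist).nodup hnd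
        · rw [List.getLast?_append] at hl
          rcases h2 : (u :: t).getLast? with _ | z
          · simp at h2
          · rw [h2] at hl; simpa using hl
        · have : (s ++ u :: t).length ≤ k + 1 := hlen
          simp at this ⊢; omega
      · refine ⟨u :: p', hc.cons ?_, by simp [hnd, hu], rfl, ?_, by simpa using hlen⟩
        · intro y hy; rw [hh] at hy; exact (by simpa using hy : x = y) ▸ hux
        · have hne : p' ≠ [] := by rintro rfl; simp at hh
          rw [List.getLast?_cons, hl]; simp

/-- vertices along a chain from u lie in balls of their index -/
lemma ball_of_chain {p : List V} (hc : p.Chain' G.Edge) {u : V} (hh : p.head? = some u) :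
    ∀ i (hi : i < p.length), G.edgeBall i u (p.get ⟨i, hi⟩) := by
  induction p generalizing u with
  | nil => intro i hi; simp at hi
  | cons a t iht =>
    intro i hi
    have hau : a = u := by simpa using hh
    match i with
    | 0 => simpa using hau ▸ G.edgeBall_self 0 u
    | Nat.succ j =>
      match t, hi with
      | b :: t', hi =>
        have h1 := List.isChain_cons.mp hc
        have hab : G.Edge a b := by simpa using h1.1 b
        have hb := iht h1.2 (u := b) rfl j (by simpa using hi)
        show G.edgeBall (j+1) u _
        subst hau
        exact Or.inr ⟨b, hab, by simpa using hb⟩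


lemma zmod_val_succ {n : ℕ} [NeZero n] (i : ZMod n) : (i + 1).val = (i.val + 1) % n := by
  rw [ZMod.val_add, ZMod.val_one_eq_one_mod]
  conv_rhs => rw [Nat.add_mod]
  rw [Nat.mod_eq_of_lt (ZMod.val_lt i)]

lemma no_loop {d : ℕ} (hg : G.GirthGE (2*d+2)) {x : V} (hx : G.Edge x x) : False := by
  have h1 : (1:ℕ) < 2*d+2 := by omega
  refine hg 1 h1 (fun _ => x) (fun _ => true) ⟨one_pos, ?_, fun i => by simp [hx], ?_, ?_⟩
  · intro a b _; exact Subsingleton.elim a b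
  · intro i j hij _ _; exact absurd (Subsingleton.elim i j) hij
  · intro i j hij _ _; exact absurd (Subsingleton.elim i j) hij


/-- common setup -/
private lemma cyc_core {d : ℕ} (hg : G.GirthGE (2*d+2)) (C : List V)
    (hn : 0 < C.length) (hnd : C.Nodup) (hc : C.Chain' G.Edge)
    {a z : V} (hh : C.head? = some a) (hl : C.getLast? = some z)
    (onlyLast : Bool)
    (hwrapE : onlyLast = false → G.Edge z a)
    (hwrapA : onlyLast = true → G.Arc z a)
    (h3 : onlyLast = false → 3 ≤ C.length)
    (hlen : C.length < 2*d+2) : False := by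
  set n := C.length with hnC
  haveI : NeZero n := ⟨hn.ne'⟩
  set v : ZMod n → V := fun i => C.get ⟨i.val, ZMod.val_lt i⟩ with hv
  have vinj : Function.Injective v := by
    intro i j hij
    have h2 : C.get ⟨i.val, ZMod.val_lt i⟩ = C.get ⟨j.val, ZMod.val_lt j⟩ := hij
    have h3 := List.nodup_iff_injective_get.mp hnd h2
    exact ZMod.val_injective n (congrArg Fin.val h3)
  have hCne : C ≠ [] := List.ne_nil_of_length_pos hn
  have ha : C.get ⟨0, hn⟩ = a := by
    rw [List.get_mk_zero]
    rw [List.head?_eq_head hCne] at hh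
    exact Option.some_injective _ hh
  have hz : C.get ⟨n-1, by omega⟩ = z := by
    rw [List.getLast?_eq_getLast hCne] at hl
    rw [← Option.some_injective _ hl, List.getLast_eq_getElem]; rfl
  have vsucc : ∀ (i : ZMod n) (h2 : i.val + 1 < n), v (i+1) = C.get ⟨i.val+1, h2⟩ := by
    intro i h2
    exact congrArg C.get (Fin.ext (by show (i+1).val = i.val + 1; rw [zmod_val_succ]; exact Nat.mod_eq_of_lt h2))
  have vwrap : ∀ (i : ZMod n), ¬ (i.val + 1 < n) → v i = z ∧ v (i+1) = a := by
    intro i h2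
    have hi : i.val + 1 = n := by have := ZMod.val_lt i; omega
    constructor
    · exact (congrArg C.get (Fin.ext (show (⟨i.val, ZMod.val_lt i⟩ : Fin n).val = n - 1 by show i.val = n - 1; omega))).trans hz
    · refine (congrArg C.get (Fin.ext ?_)).trans ha
      show (i+1).val = 0
      rw [zmod_val_succ, hi, Nat.mod_self]
  have hstep : ∀ (i : ZMod n) (h2 : i.val + 1 < n), G.Edge (v i) (v (i+1)) := by
    intro i h2
    rw [vsucc i h2]
    exact List.isChain_iff_getElem.mp hc i.val (by omega)
  have hpair : ∀ i j : ZMod n, i ≠ j →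
      ({v i, v (i + 1)} : Set V) = {v j, v (j + 1)} → (n ∣ 2) := by
    intro i j hij hset
    have m1 : v i = v j ∨ v i = v (j + 1) := by
      have h5 : v i ∈ ({v j, v (j+1)} : Set V) := by rw [← hset]; exact Set.mem_insert _ _
      simpa using h5
    have m2 : v (i+1) = v j ∨ v (i+1) = v (j + 1) := by
      have h5 : v (i+1) ∈ ({v j, v (j+1)} : Set V) := by
        rw [← hset]; exact Set.mem_insert_of_mem _ rfl
      simpa using h5
    rcases m1 with m1 | m1
    · exact absurd (vinj m1) hij
    rcases m2 with m2 | m2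
    · have e1 : i = j + 1 := vinj m1
      have e2 : i + 1 = j := vinj m2
      have h22 : i = i + 1 + 1 := e1.trans (congrArg (· + 1) e2.symm)
      have h24 : i = i + 2 := by nth_rewrite 1 [h22]; ring
      have h25 : (2 : ZMod n) = 0 := left_eq_add.mp h24
      have h0 : ((2:ℕ) : ZMod n) = 0 := by push_cast; exact h25
      exact (ZMod.natCast_eq_zero_iff 2 n).mp h0
    · exact absurd (add_right_cancel (vinj m2)) hij
  cases onlyLast with
  | false =>
    have h3' := h3 rfl
    refine hg n hlen v (fun _ => true) ⟨hn, vinj, ?_, ?_, ?_⟩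
    · intro i
      simp only [if_true]
      by_cases h2 : i.val + 1 < n
      · exact hstep i h2
      · obtain ⟨e1, e2⟩ := vwrap i h2; rw [e1, e2]; exact hwrapE rfl
    · intro i j hij _ _ hset
      have := Nat.le_of_dvd two_pos (hpair i j hij hset)
      omega
    · intro i j hij h _; simp at h
  | true =>
    refine hg n hlen v (fun i => decide (i.val + 1 < n)) ⟨hn, vinj, ?_, ?_, ?_⟩
    · intro i
      by_cases h2 : i.val + 1 < n
      · simpa [h2] using hstep i h2
      · obtain ⟨e1, e2⟩ := vwrap i h2
        simp only [h2, decide_false, if_false]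
        rw [e1, e2]; exact hwrapA rfl
    · intro i j hij hi hj hset
      have hn2 := Nat.le_of_dvd two_pos (hpair i j hij hset)
      have hi2 : i.val + 1 < n := by simpa using hi
      have hj2 : j.val + 1 < n := by simpa using hj
      exact hij (ZMod.val_injective n (by omega))
    · intro i j hij hi hj _
      have hi2 : ¬ (i.val + 1 < n) := by simpa using hi
      have hj2 : ¬ (j.val + 1 < n) := by simpa using hj
      have := ZMod.val_lt i; have := ZMod.val_lt j
      exact absurd (ZMod.val_injective n (by omega)) hij

lemma cycA {d : ℕ} (hg : G.GirthGE (2*d+2)) (C : List V)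
    (h3 : 3 ≤ C.length) (hlen : C.length < 2*d+2) (hnd : C.Nodup)
    (hc : C.Chain' G.Edge) {a z : V} (hh : C.head? = some a) (hl : C.getLast? = some z)
    (hwrap : G.Edge z a) : False :=
  cyc_core G hg C (by omega) hnd hc hh hl false (fun _ => hwrap) (by simp) (fun _ => h3) hlen

lemma cycB {d : ℕ} (hg : G.GirthGE (2*d+2)) (C : List V)
    (h1 : C ≠ []) (hlen : C.length < 2*d+2) (hnd : C.Nodup)
    (hc : C.Chain' G.Edge) {a z : V} (hh : C.head? = some a) (hl : C.getLast? = some z)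
    (hwrap : G.Arc z a) : False :=
  cyc_core G hg C (List.length_pos_iff.mpr h1) hnd hc hh hl true (by simp) (fun _ => hwrap)
    (by simp) hlen

lemma no_two_paths {d : ℕ} (hg : G.GirthGE (2*d+2)) :
    ∀ N (p q : List V), p.length + q.length ≤ N → p.length + q.length ≤ 2*d+2 →
    p.Chain' G.Edge → q.Chain' G.Edge → p.Nodup → q.Nodup →
    p.head? = q.head? → p.getLast? = q.getLast? → p ≠ [] → p ≠ q → False := by
  intro N
  induction N using Nat.strong_induction_on with
  | _ N IH =>
  intro p q hN hsum hcp hcq hndp hndq hhead hlast hpne hpq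
  match p, q with
  | [], _ => exact hpne rfl
  | p, [] => rw [List.head?_eq_head hpne] at hhead; simp at hhead
  | a :: p', b :: q' =>
    have hab : a = b := by simpa using hhead
    subst hab
    match p', q' with
    | [], q' =>
      have h2 : (a :: q') = [a] :=
        eq_singleton_of_nodup hndq (by simp) (by rw [← hlast]; simp)
      exact hpq h2.symm
    | p', [] =>
      have h2 : (a :: p') = [a] :=
        eq_singleton_of_nodup hndp rfl (by rw [hlast]; simp)
      exact hpq h2
    | a2 :: p'', b2 :: q'' =>
      by_cases h22 : a2 = b2
      · subst h22
        refine IH ((a2 :: p'').length + (a2 :: q'').length) (by simp at hN ⊢; omega)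
          (a2 :: p'') (a2 :: q'') le_rfl (by simp at hsum ⊢; omega)
          hcp.tail hcq.tail hndp.of_cons hndq.of_cons rfl ?_ (by simp) ?_
        · rw [← List.getLast?_cons_cons (a := a) (b := a2),
            ← List.getLast?_cons_cons (a := a) (b := a2)]
          exact hlast
        · intro h; exact hpq (by rw [h])
      · set P : List V := a :: a2 :: p'' with hPdef
        set Q : List V := a :: b2 :: q'' with hQdef
        by_cases hshare : ∃ c, c ∈ P ∧ c ∈ Q ∧ c ≠ a ∧ some c ≠ P.getLast?
        · obtain ⟨c, hcP, hcQ, hcb, hclast⟩ := hshare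
          obtain ⟨p1, p2, hp⟩ := List.append_of_mem hcP
          obtain ⟨q1, q2, hq⟩ := List.append_of_mem hcQ
          have hp1ne : p1 ≠ [] := by
            rintro rfl; rw [List.nil_append] at hp
            have h6 : P.head? = some c := by rw [hp]; rfl
            rw [hPdef] at h6
            exact hcb (by simpa using h6.symm)
          have hp2ne : p2 ≠ [] := by
            rintro rfl
            exact hclast (by rw [hp, List.getLast?_concat])
          have hq1ne : q1 ≠ [] := by
            rintro rfl; rw [List.nil_append] at hq
            have h6 : Q.head? = some c := by rw [hq]; rfl
            rw [hQdef] at h6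
            exact hcb (by simpa using h6.symm)
          have hq2ne : q2 ≠ [] := by
            rintro rfl
            rw [hlast] at hclast
            exact hclast (by rw [hq, List.getLast?_concat])
          have hppart : P = (p1 ++ [c]) ++ p2 := by rw [hp]; simp
          have hqpart : Q = (q1 ++ [c]) ++ q2 := by rw [hq]; simp
          have hplen : P.length = p1.length + 1 + p2.length := by
            rw [hp]; simp only [List.length_append, List.length_cons]; omega
          have hqlen : Q.length = q1.length + 1 + q2.length := by
            rw [hq]; simp only [List.length_append, List.length_cons]; omega
          have hp1len : 1 ≤ p1.length := List.length_pos_iff.mpr hp1ne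
          have hp2len : 1 ≤ p2.length := List.length_pos_iff.mpr hp2ne
          have hq1len : 1 ≤ q1.length := List.length_pos_iff.mpr hq1ne
          have hq2len : 1 ≤ q2.length := List.length_pos_iff.mpr hq2ne
          by_cases hPQ : p1 ++ [c] = q1 ++ [c]
          · -- recurse on suffixes
            refine IH ((c :: p2).length + (c :: q2).length)
              (by simp only [List.length_cons]; omega)
              (c :: p2) (c :: q2) le_rfl (by simp only [List.length_cons]; omega)
              (hcp.suffix ⟨p1, hp.symm⟩) (hcq.suffix ⟨q1, hq.symm⟩)
              ((hp ▸ hndp).sublist (List.sublist_append_right p1 _))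
              ((hq ▸ hndq).sublist (List.sublist_append_right q1 _)) rfl ?_ (by simp) ?_
            · rw [show ((c :: p2).getLast? = P.getLast?) from
                (by rw [hp, List.getLast?_append_of_ne_nil p1 (by simp)]),
                show ((c :: q2).getLast? = Q.getLast?) from
                (by rw [hq, List.getLast?_append_of_ne_nil q1 (by simp)])]
              exact hlast
            · intro h
              have h7 : p2 = q2 := (List.cons.injEq .. ▸ h).2
              refine hpq ?_
              show P = Q
              rw [hppart, hqpart, hPQ, h7]
          · -- recurse on prefixes
            refine IH ((p1 ++ [c]).length + (q1 ++ [c]).length)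
              (by simp only [List.length_append, List.length_cons, List.length_nil]; omega)
              (p1 ++ [c]) (q1 ++ [c]) le_rfl
              (by simp only [List.length_append, List.length_cons, List.length_nil]; omega)
              (hcp.prefix ⟨p2, hppart.symm⟩) (hcq.prefix ⟨q2, hqpart.symm⟩)
              ((hppart ▸ hndp).sublist (List.sublist_append_left _ p2))
              ((hqpart ▸ hndq).sublist (List.sublist_append_left _ q2)) ?_
              (by rw [List.getLast?_concat, List.getLast?_concat]) (by simp) hPQ
            · rw [List.head?_append, List.head?_append,
                List.head?_eq_head hp1ne, List.head?_eq_head hq1ne]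
              have e1 : p1.head hp1ne = a := by
                have h6 := congrArg List.head? hppart
                rw [List.head?_append, List.head?_append, List.head?_eq_head hp1ne] at h6
                rw [hPdef] at h6
                simpa using h6.symm
              have e2 : q1.head hq1ne = a := by
                have h6 := congrArg List.head? hqpart
                rw [List.head?_append, List.head?_append, List.head?_eq_head hq1ne] at h6
                rw [hQdef] at h6
                simpa using h6.symm
              rw [e1, e2]
        · -- no internal shared vertex: build a cycle
          push_neg at hshare
          obtain ⟨z, hz⟩ : ∃ z, P.getLast? = some z :=
            ⟨P.getLast (by simp), List.getLast?_eq_getLast _⟩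
          have hzQ : Q.getLast? = some z := by rw [← hlast]; exact hz
          have hq'ne : (b2 :: q'') ≠ [] := by simp
          have hql' : (b2 :: q'').getLast? = some z := by
            rw [← List.getLast?_cons_cons (a := a) (b := b2)]
            exact hzQ
          set m : List V := (b2 :: q'').dropLast with hmdef
          have hqdecomp : (b2 :: q'') = m ++ [z] := by
            have h5 := List.dropLast_append_getLast hq'ne
            rw [List.getLast?_eq_getLast hq'ne] at hql'
            rw [Option.some_injective _ hql'] at h5
            exact h5.symm
          set C : List V := P.reverse ++ m with hCdef
          have hmQ : ∀ x ∈ m, x ∈ Q := fun x hx =>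
            List.mem_cons_of_mem a (List.mem_of_mem_dropLast hx)
          have hanotq' : a ∉ (b2 :: q'') := (List.nodup_cons.mp hndq).1
          have hznotm : z ∉ m := by
            intro hzm
            have h5 := hqdecomp ▸ (List.nodup_cons.mp hndq).2
            exact (List.disjoint_of_nodup_append h5) hzm (by simp)
          have hm2 : m.length = q''.length := by
            have h5 := congrArg List.length hqdecomp
            simp only [List.length_cons, List.length_append, List.length_nil] at h5
            omega
          have hPlen : P.length = p''.length + 2 := by rw [hPdef]; simp
          have hQlen : Q.length = q''.length + 2 := by rw [hQdef]; simp
          have hClen : C.length = P.length + m.length := by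
            rw [hCdef]; simp
          have hsum' : P.length + Q.length ≤ 2*d+2 := hsum
          -- C is nontrivial
          have hC3 : 3 ≤ C.length := by
            by_cases hpq2 : p'' = [] ∧ q'' = []
            · exfalso
              obtain ⟨e1, e2⟩ := hpq2
              have e3 : z = a2 := by
                rw [hPdef, e1] at hz; simpa using hz.symm
              have e4 : z = b2 := by
                rw [hQdef, e2] at hzQ; simpa using hzQ.symm
              exact h22 (e3 ▸ e4)
            · have h5 : p'' ≠ [] ∨ q'' ≠ [] := by tauto
              have h6 : 1 ≤ p''.length ∨ 1 ≤ q''.length := by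
                rcases h5 with h5 | h5
                · exact Or.inl (List.length_pos_iff.mpr h5)
                · exact Or.inr (List.length_pos_iff.mpr h5)
              rcases h6 with h6 | h6 <;> omega
          have hCsmall : C.length < 2*d+2 := by omega
          have hndC : C.Nodup := by
            refine List.Nodup.append (List.nodup_reverse.mpr hndp)
              ((hndq.of_cons).sublist (List.dropLast_sublist _)) ?_
            intro x hx1 hx2
            have hxP : x ∈ P := List.mem_reverse.mp hx1
            have hxQ : x ∈ Q := hmQ x hx2
            rcases eq_or_ne x a with rfl | hxb
            · exact hanotq' (List.mem_of_mem_dropLast hx2)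
            · have h5 := hshare x hxP hxQ hxb
              rw [hz] at h5
              exact hznotm ((Option.some_injective _ h5) ▸ hx2)
          have hqtail : (m ++ [z]).Chain' G.Edge := by
            rw [← hqdecomp]; exact hcq.tail
          have hchC : C.Chain' G.Edge := by
            refine List.IsChain.append ?_ ?_ ?_
            · exact List.isChain_reverse.mpr
                (List.IsChain.imp (fun x y h => G.edge_symm _ _ h) hcp)
            · exact (hcq.tail).prefix (List.dropLast_prefix _)
            · intro x hx y hy
              rw [List.getLast?_reverse] at hx
              have hxb : a = x := by
                rw [hPdef] at hx; simpa using hx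
              match hm : m, hy with
              | mh :: mt, hy =>
                have hmh : mh = b2 := by
                  have h5 := congrArg List.head? hqdecomp
                  simpa using h5.symm
                have hyv : mh = y := by simpa using hy
                rw [← hxb, ← hyv, hmh]
                exact (List.isChain_cons.mp hcq).1 b2 (by simp)
          have hheadC : C.head? = some z := by
            rw [hCdef, List.head?_append, List.head?_reverse, hz]
            rfl
          -- wrap edge and conclusion
          match hm : m, hqtail, hznotm with
          | [], hqtail, hznotm =>
            have e5 : b2 = z := by
              have h9 : b2 = z ∧ q'' = [] := by simpa using hqdecomp
              exact h9.1
            have hlastC : C.getLast? = some a := by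
              rw [hCdef, List.append_nil, List.getLast?_reverse, hPdef]
              rfl
            have hwrap : G.Edge a z := by
              rw [← e5]
              exact (List.isChain_cons.mp hcq).1 b2 (by simp)
            exact cycA G hg C hC3 hCsmall hndC hchC hheadC hlastC hwrap
          | mh :: mt, hqtail, hznotm =>
            obtain ⟨y2, hy2⟩ : ∃ y2, (mh :: mt).getLast? = some y2 :=
              ⟨(mh :: mt).getLast (by simp), List.getLast?_eq_getLast _⟩
            have hlastC : C.getLast? = some y2 := by
              rw [hCdef, List.getLast?_append_of_ne_nil _ (by simp)]
              exact hy2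
            have hwrap : G.Edge y2 z := by
              exact (List.isChain_append.mp hqtail).2.2 y2 hy2 z rfl
            exact cycA G hg C hC3 hCsmall hndC hchC hheadC hlastC hwrap

lemma head?_append_of_ne_nil' {α : Type*} {l1 : List α} (l2 : List α) (h : l1 ≠ []) :
    (l1 ++ l2).head? = l1.head? := by
  rw [List.head?_append, List.head?_eq_head h]; rfl

/-- A vertex outside the ball of radius `k` cannot have two distinct neighbours
in the ball of radius `k+1`, when `k+2 ≤ d`. -/
lemma two_parents {d : ℕ} (hg : G.GirthGE (2*d+2)) {k : ℕ} (hk : k + 2 ≤ d)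
    {u x y y' : V} (hyy' : y ≠ y') (hxy : G.Edge x y) (hxy' : G.Edge x y')
    (hy : G.edgeBall (k+1) u y) (hy' : G.edgeBall (k+1) u y')
    (hx : ¬ G.edgeBall k u x) : False := by
  have hxy_ne : x ≠ y := fun h => G.no_loop hg (h ▸ hxy)
  have hxy'_ne : x ≠ y' := fun h => G.no_loop hg (h ▸ hxy')
  obtain ⟨p0, hcp, hndp, hhp, hlp, hlenp⟩ := G.exists_path hy
  obtain ⟨q0, hcq, hndq, hhq, hlq, hlenq⟩ := G.exists_path hy'
  have hp0ne : p0 ≠ [] := by rintro rfl; simp at hhp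
  have hq0ne : q0 ≠ [] := by rintro rfl; simp at hhq
  have hxnot : ∀ (l : List V) (hnd : l.Nodup) (hc : l.Chain' G.Edge)
      (hh : l.head? = some u) (hl : l.getLast? = some y ∨ l.getLast? = some y')
      (hlen : l.length ≤ k + 2), x ∉ l := by
    intro l hnd hc hh hl hlen hxl
    obtain ⟨⟨i, hi⟩, hget⟩ := List.mem_iff_get.mp hxl
    have hball := G.ball_of_chain hc hh i hi
    rw [hget] at hball
    rcases lt_or_eq_of_le (Nat.lt_succ_iff.mp (by omega : i < k + 2)) with hik | hik
    · exact hx (G.edgeBall_le (by omega) hball)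
    · -- i = k+1, so x is the last entry
      have hlne : l ≠ [] := by rintro rfl; simp at hi
      have hlen2 : l.length = k + 2 := by omega
      have hfin : (⟨i, hi⟩ : Fin l.length) = ⟨l.length - 1, by omega⟩ :=
        Fin.ext (by show i = l.length - 1; omega)
      rw [hfin] at hget
      replace hget : l.getLast hlne = x := by rw [List.getLast_eq_getElem hlne]; exact hget
      rw [List.getLast?_eq_getLast hlne] at hl
      rcases hl with hl | hl
      · exact hxy_ne (hget.symm.trans (Option.some_injective _ hl))
      · exact hxy'_ne (hget.symm.trans (Option.some_injective _ hl))
  have hxp : x ∉ p0 := hxnot p0 hndp hcp hhp (Or.inl hlp) (by omega)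
  have hxq : x ∉ q0 := hxnot q0 hndq hcq hhq (Or.inr hlq) (by omega)
  have hylast : ∀ (l : List V) (w : V), l.getLast? = some w →
      (l ++ [x]).Chain' G.Edge → True := fun _ _ _ _ => trivial
  refine G.no_two_paths hg ((p0 ++ [x]).length + (q0 ++ [x]).length)
    (p0 ++ [x]) (q0 ++ [x]) le_rfl ?_ ?_ ?_ ?_ ?_ ?_ ?_ (by simp) ?_
  · simp only [List.length_append, List.length_cons, List.length_nil]; omega
  · refine List.IsChain.append hcp (List.isChain_singleton x) ?_
    intro b hb c hc2
    have hb2 : y = b := by rw [hlp] at hb; simpa using hb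
    have hc3 : x = c := by simpa using hc2
    rw [← hb2, ← hc3]
    exact G.edge_symm _ _ hxy
  · refine List.IsChain.append hcq (List.isChain_singleton x) ?_
    intro b hb c hc2
    have hb2 : y' = b := by rw [hlq] at hb; simpa using hb
    have hc3 : x = c := by simpa using hc2
    rw [← hb2, ← hc3]
    exact G.edge_symm _ _ hxy'
  · exact List.Nodup.append hndp (by simp) (fun b hb hb2 => by
      rw [List.mem_singleton] at hb2; exact hxp (hb2 ▸ hb))
  · exact List.Nodup.append hndq (by simp) (fun b hb hb2 => by
      rw [List.mem_singleton] at hb2; exact hxq (hb2 ▸ hb))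
  · rw [List.head?_append, List.head?_append, hhp, hhq]
  · rw [List.getLast?_concat, List.getLast?_concat]
  · intro h
    have h2 : p0 = q0 := by
      have := congrArg List.dropLast h
      rwa [List.dropLast_concat, List.dropLast_concat] at this
    rw [h2, hlq] at hlp
    exact hyy' (Option.some_injective _ hlp.symm)

/-- disjointness of the two balls joined by an arc -/
lemma balls_disjoint_aux {d : ℕ} (hg : G.GirthGE (2*d+2)) {u v : V} (harc : G.Arc u v) :
    ∀ N (w : V) (p q : List V),
      p.Chain' G.Edge → q.Chain' G.Edge → p.Nodup → q.Nodup →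
      p.head? = some u → q.head? = some v →
      p.getLast? = some w → q.getLast? = some w →
      p.length ≤ d+1 → q.length ≤ d+1 → p.length + q.length ≤ N → False := by
  intro N
  induction N using Nat.strong_induction_on with
  | _ N IH =>
  intro w p q hcp hcq hndp hndq hhp hhq hlp hlq hp1 hq1 hN
  have hpne : p ≠ [] := by rintro rfl; simp at hhp
  have hqne : q ≠ [] := by rintro rfl; simp at hhq
  by_cases hshare : ∃ c, c ∈ p ∧ c ∈ q ∧ some c ≠ p.getLast?
  · obtain ⟨c, hcp1, hcq1, hclast⟩ := hshare
    obtain ⟨p1, p2, hp⟩ := List.append_of_mem hcp1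
    obtain ⟨q1, q2, hq⟩ := List.append_of_mem hcq1
    have hp2ne : p2 ≠ [] := by
      rintro rfl; exact hclast (by rw [hp, List.getLast?_concat])
    have hq2ne : q2 ≠ [] := by
      rintro rfl
      rw [hlp, ← hlq] at hclast
      exact hclast (by rw [hq, List.getLast?_concat])
    have hppart : p = (p1 ++ [c]) ++ p2 := by rw [hp]; simp
    have hqpart : q = (q1 ++ [c]) ++ q2 := by rw [hq]; simp
    have hplen : p.length = p1.length + 1 + p2.length := by
      rw [hp]; simp only [List.length_append, List.length_cons]; omega
    have hqlen : q.length = q1.length + 1 + q2.length := by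
      rw [hq]; simp only [List.length_append, List.length_cons]; omega
    have hp2len : 1 ≤ p2.length := List.length_pos_iff.mpr hp2ne
    have hq2len : 1 ≤ q2.length := List.length_pos_iff.mpr hq2ne
    refine IH ((p1 ++ [c]).length + (q1 ++ [c]).length)
      (by simp only [List.length_append, List.length_cons, List.length_nil]; omega)
      c (p1 ++ [c]) (q1 ++ [c])
      (hcp.prefix ⟨p2, hppart.symm⟩) (hcq.prefix ⟨q2, hqpart.symm⟩)
      ((hppart ▸ hndp).sublist (List.sublist_append_left _ p2))
      ((hqpart ▸ hndq).sublist (List.sublist_append_left _ q2)) ?_ ?_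
      List.getLast?_concat List.getLast?_concat ?_ ?_ le_rfl
    · rw [← head?_append_of_ne_nil' p2 (show p1 ++ [c] ≠ [] by simp), ← hppart]
      exact hhp
    · rw [← head?_append_of_ne_nil' q2 (show q1 ++ [c] ≠ [] by simp), ← hqpart]
      exact hhq
    · simp only [List.length_append, List.length_cons, List.length_nil]; omega
    · simp only [List.length_append, List.length_cons, List.length_nil]; omega
  · push_neg at hshare
    have hrevne : p.reverse ≠ [] := by simpa using hpne
    obtain ⟨t, ht⟩ : ∃ t, p.reverse = w :: t := by
      match hrev : p.reverse with
      | [] => exact absurd hrev hrevne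
      | x :: t =>
        have : x = w := by
          have h5 := List.head?_reverse (l := p)
          rw [hrev, hlp] at h5
          simpa using h5
        exact ⟨t, by rw [this]⟩
    have hchainrev : (w :: t).Chain' G.Edge := by
      rw [← ht]
      exact List.isChain_reverse.mpr (List.IsChain.imp (fun x y h => G.edge_symm _ _ h) hcp)
    have hndrev : (w :: t).Nodup := by rw [← ht]; exact List.nodup_reverse.mpr hndp
    have htp : ∀ x ∈ t, x ∈ p := by
      intro x hx
      rw [← List.mem_reverse, ht]
      exact List.mem_cons_of_mem w hx
    have hwt : w ∉ t := (List.nodup_cons.mp hndrev).1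
    set C : List V := q ++ t with hCdef
    have hndC : C.Nodup := by
      refine List.Nodup.append hndq ((List.nodup_cons.mp hndrev).2) ?_
      intro x hx1 hx2
      have h5 := hshare x (htp x hx2) hx1
      rw [hlp] at h5
      exact hwt ((Option.some_injective _ h5) ▸ hx2)
    have hchC : C.Chain' G.Edge := by
      refine List.IsChain.append hcq (hchainrev.tail) ?_
      intro b hb c hc2
      have hb2 : w = b := by rw [hlq] at hb; simpa using hb
      subst hb2
      exact (List.isChain_cons.mp hchainrev).1 c hc2
    have hheadC : C.head? = some v := by
      rw [hCdef, List.head?_append, hhq]; rfl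
    have hlenC : C.length < 2*d+2 := by
      have h5 : p.length = t.length + 1 := by
        have := congrArg List.length ht
        simpa using this
      have h6 : C.length = q.length + t.length := by rw [hCdef]; simp
      omega
    have hCne : C ≠ [] := by
      rw [hCdef]
      intro h5
      exact hqne (List.append_eq_nil_iff.mp h5).1
    match hmt : t, hwt, hchainrev, hndrev with
    | [], hwt, hchainrev, hndrev =>
      -- p = [w], so u = w
      have hpw : p = [w] := by
        have := congrArg List.reverse ht
        simpa [hmt] using this
      have huw : u = w := by
        rw [hpw] at hhp
        simpa using hhp.symm
      have hlastC : C.getLast? = some u := by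
        rw [hCdef, List.append_nil, hlq, huw]
      exact G.cycB hg C hCne hlenC hndC hchC hheadC hlastC harc
    | th :: tt, hwt, hchainrev, hndrev =>
      have hlastC : C.getLast? = some u := by
        rw [hCdef, List.getLast?_append_of_ne_nil _ (by simp)]
        have h5 : (w :: th :: tt).getLast? = p.head? := by
          rw [← ht]
          exact (List.getLast?_reverse (l := p))
        rw [List.getLast?_cons_cons] at h5
        rw [h5, hhp]
      exact G.cycB hg C hCne hlenC hndC hchC hheadC hlastC harc

lemma balls_disjoint {d : ℕ} (hg : G.GirthGE (2*d+2)) {u v : V} (harc : G.Arc u v)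
    {w : V} (hu : G.edgeBall d u w) (hv : G.edgeBall d v w) : False := by
  obtain ⟨p, hcp, hndp, hhp, hlp, hlenp⟩ := G.exists_path hu
  obtain ⟨q, hcq, hndq, hhq, hlq, hlenq⟩ := G.exists_path hv
  exact G.balls_disjoint_aux hg harc (p.length + q.length) w p q hcp hcq hndp hndq
    hhp hhq hlp hlq hlenp hlenq le_rfl

lemma ball_card_ge {d r : ℕ} [Fintype V] (hg : G.GirthGE (2*d+2))
    (hdeg : ∀ v : V, r ≤ Nat.card {w : V // G.Edge v w}) (hr : 1 ≤ r) (u : V) :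
    mooreBound r d ≤ Nat.card {w : V | G.edgeBall d u w} := by
  classical
  set Bf : ℕ → Finset V := fun k => Finset.univ.filter (fun w => G.edgeBall k u w)
    with hBf
  have hmem : ∀ k w, w ∈ Bf k ↔ G.edgeBall k u w := by
    intro k w; simp [hBf]
  have hB0 : Bf 0 = {u} := by
    ext w
    rw [hmem]
    show G.edgeBall 0 u w ↔ _
    simp [edgeBall]
  have hmono : ∀ k, Bf k ⊆ Bf (k+1) := by
    intro k w hw
    rw [hmem] at hw ⊢
    exact G.edgeBall_mono hw
  have hdegF : ∀ x : V, r ≤ (Finset.univ.filter (fun w => G.Edge x w)).card := by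
    intro x
    have h1 := hdeg x
    rwa [Nat.card_eq_fintype_card, Fintype.card_subtype] at h1
  -- sphere lower bound step
  have hstep : ∀ k : ℕ, k + 2 ≤ d →
      (r - 1) * (Bf (k+1) \ Bf k).card ≤ (Bf (k+2) \ Bf (k+1)).card := by
    intro k hk
    set A := Bf (k+1) \ Bf k with hA
    set B := Bf (k+2) \ Bf (k+1) with hB
    have hAfacts : ∀ x ∈ A, G.edgeBall (k+1) u x ∧ ¬ G.edgeBall k u x := by
      intro x hx
      rw [hA, Finset.mem_sdiff, hmem, hmem] at hx
      exact hx
    have hBfacts : ∀ y ∈ B, G.edgeBall (k+2) u y ∧ ¬ G.edgeBall (k+1) u y := by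
      intro y hy
      rw [hB, Finset.mem_sdiff, hmem, hmem] at hy
      exact hy
    have hfiberA : ∀ x ∈ A, (r - 1) ≤ (B.filter (fun y => G.Edge x y)).card := by
      intro x hx
      obtain ⟨hx1, hx2⟩ := hAfacts x hx
      set N := Finset.univ.filter (fun w => G.Edge x w) with hN
      have hNmem : ∀ y, y ∈ N ↔ G.Edge x y := by intro y; simp [hN]
      have hNB : (N ∩ Bf (k+1)).card ≤ 1 := by
        rw [Finset.card_le_one]
        intro y hy y' hy'
        rw [Finset.mem_inter, hNmem, hmem] at hy hy'
        by_contra hne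
        exact G.two_parents hg hk hne hy.1 hy'.1 hy.2 hy'.2 hx2
      have hsub : N \ Bf (k+1) ⊆ B.filter (fun y => G.Edge x y) := by
        intro y hy
        rw [Finset.mem_sdiff, hNmem, hmem] at hy
        rw [Finset.mem_filter, hB, Finset.mem_sdiff, hmem, hmem]
        exact ⟨⟨G.edgeBall_of_edge hx1 hy.1, hy.2⟩, hy.1⟩
      have h5 : (N ∩ Bf (k+1)).card + (N \ Bf (k+1)).card = N.card :=
        Finset.card_inter_add_card_sdiff N (Bf (k+1))
      have h6 := hdegF x
      rw [← hN] at h6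
      calc r - 1 ≤ (N \ Bf (k+1)).card := by omega
        _ ≤ _ := Finset.card_le_card hsub
    have hfiberB : ∀ y ∈ B, (A.filter (fun x => G.Edge x y)).card ≤ 1 := by
      intro y hy
      obtain ⟨hy1, hy2⟩ := hBfacts y hy
      rw [Finset.card_le_one]
      intro x hx x' hx'
      rw [Finset.mem_filter] at hx hx'
      obtain ⟨hxA, hxe⟩ := hx
      obtain ⟨hx'A, hx'e⟩ := hx'
      by_contra hne
      have hyk : ¬ G.edgeBall k u y := fun h => hy2 (G.edgeBall_mono h)
      exact G.two_parents hg hk hne (G.edge_symm _ _ hxe) (G.edge_symm _ _ hx'e)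
        (hAfacts x hxA).1 (hAfacts x' hx'A).1 hyk
    calc (r - 1) * A.card = ∑ _x ∈ A, (r-1) := by
          rw [Finset.sum_const, smul_eq_mul, mul_comm]
      _ ≤ ∑ x ∈ A, (B.filter (fun y => G.Edge x y)).card :=
          Finset.sum_le_sum hfiberA
      _ = ∑ x ∈ A, ∑ y ∈ B, if G.Edge x y then 1 else 0 := by
          refine Finset.sum_congr rfl fun x _ => ?_
          rw [Finset.card_filter]
      _ = ∑ y ∈ B, ∑ x ∈ A, if G.Edge x y then 1 else 0 := Finset.sum_comm
      _ = ∑ y ∈ B, (A.filter (fun x => G.Edge x y)).card := by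
          refine Finset.sum_congr rfl fun y _ => ?_
          rw [Finset.card_filter]
      _ ≤ ∑ _y ∈ B, 1 := Finset.sum_le_sum hfiberB
      _ = B.card := by simp
  -- first sphere
  have hbase : 1 ≤ d → r ≤ (Bf 1 \ Bf 0).card := by
    intro hd
    have hsub : Finset.univ.filter (fun w => G.Edge u w) ⊆ Bf 1 \ Bf 0 := by
      intro y hy
      rw [Finset.mem_filter] at hy
      rw [Finset.mem_sdiff, hmem, hmem]
      refine ⟨Or.inr ⟨y, hy.2, rfl⟩, ?_⟩
      show ¬ (y = u)
      rintro rfl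
      exact G.no_loop hg hy.2
    exact le_trans (hdegF u) (Finset.card_le_card hsub)
  -- spheres lower bound
  have hsphere : ∀ k : ℕ, k + 1 ≤ d → r * (r-1)^k ≤ (Bf (k+1) \ Bf k).card := by
    intro k
    induction k with
    | zero => intro hd; simpa using hbase hd
    | succ k ih =>
      intro hd
      have h1 := ih (by omega)
      have h2 := hstep k (by omega)
      calc r * (r-1)^(k+1) = (r-1) * (r * (r-1)^k) := by ring
        _ ≤ (r-1) * (Bf (k+1) \ Bf k).card := Nat.mul_le_mul_left _ h1
        _ ≤ _ := h2
  -- telescoping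
  have htel : ∀ k : ℕ, k ≤ d → 1 + r * ∑ j ∈ Finset.range k, (r - 1) ^ j ≤ (Bf k).card := by
    intro k
    induction k with
    | zero => intro _; simp [hB0]
    | succ k ih =>
      intro hd
      have h1 := ih (by omega)
      have h2 := hsphere k hd
      have h3 : (Bf (k+1) \ Bf k).card + (Bf k).card = (Bf (k+1)).card :=
        Finset.card_sdiff_add_card_eq_card (hmono k)
      rw [Finset.sum_range_succ]
      calc 1 + r * (∑ j ∈ Finset.range k, (r-1)^j + (r-1)^k)
          = (1 + r * ∑ j ∈ Finset.range k, (r-1)^j) + r * (r-1)^k := by ring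
        _ ≤ (Bf k).card + (Bf (k+1) \ Bf k).card := Nat.add_le_add h1 h2
        _ = (Bf (k+1)).card := by omega
  have hfinal := htel d le_rfl
  have hcardeq : Nat.card {w : V | G.edgeBall d u w} = (Bf d).card := by
    rw [Nat.card_eq_fintype_card, Fintype.card_subtype]
    congr 1
  calc mooreBound r d ≤ (Bf d).card := hfinal
    _ = Nat.card {w : V | G.edgeBall d u w} := hcardeq.symm

end MixedGraph

theorem arc_balls_disjoint (V : Type) [Fintype V] (G : MixedGraph V)
    (r d : ℕ) (hr : 3 ≤ r)
    (hgirth : G.GirthGE (2 * d + 2))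
    (hdeg : ∀ v : V, r ≤ Nat.card {w : V // G.Edge v w})
    (u v : V) (harc : G.Arc u v) :
    Disjoint {w : V | G.edgeBall d u w} {w : V | G.edgeBall d v w} ∧
    mooreBound r d ≤ Nat.card {w : V | G.edgeBall d u w} ∧
    mooreBound r d ≤ Nat.card {w : V | G.edgeBall d v w} ∧
    2 * mooreBound r d ≤ Fintype.card V := by
  have hdisj : Disjoint {w : V | G.edgeBall d u w} {w : V | G.edgeBall d v w} := by
    rw [Set.disjoint_left]
    intro w hw1 hw2
    exact G.balls_disjoint hgirth harc hw1 hw2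
  have h1 := G.ball_card_ge hgirth hdeg (by omega) u
  have h2 := G.ball_card_ge hgirth hdeg (by omega) v
  refine ⟨hdisj, h1, h2, ?_⟩
  have hunion := Set.ncard_union_eq hdisj (Set.toFinite _) (Set.toFinite _)
  calc 2 * mooreBound r d = mooreBound r d + mooreBound r d := by ring
    _ ≤ Nat.card {w : V | G.edgeBall d u w} + Nat.card {w : V | G.edgeBall d v w} :=
        Nat.add_le_add h1 h2
    _ = ({w : V | G.edgeBall d u w}).ncard + ({w : V | G.edgeBall d v w}).ncard := by
        rw [Nat.card_coe_set_eq, Nat.card_coe_set_eq]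
    _ = ({w : V | G.edgeBall d u w} ∪ {w : V | G.edgeBall d v w}).ncard := hunion.symm
    _ ≤ (Set.univ : Set V).ncard :=
        Set.ncard_le_ncard (Set.subset_univ _) Set.finite_univ
    _ = Nat.card V := Set.ncard_univ V
    _ = Fintype.card V := Nat.card_eq_fintype_card
end

section
/- There exists a mixed graph on exactly 30 vertices in which every vertex has undirected degree 3, out-degree 1, in-degree 1, and whose mixed girth is exactly 6. -/
set_option maxRecDepth 100000


namespace Cage316

/-- Undirected neighbor lists of a cubic graph of girth 6 on 30 vertices. -/
def nb : Fin 30 → List (Fin 30) :=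
  ![[6,13,17], [24,27,29], [3,7,11], [2,4,17], [3,21,28], [6,12,25], [0,5,24], [2,8,14], [7,16,23], [15,17,22], [16,21,24], [2,12,18], [5,11,27], [0,20,28], [7,28,29], [9,23,26], [8,10,19], [0,3,9], [11,26,29], [16,20,26], [13,19,22], [4,10,25], [9,20,27], [8,15,25], [1,6,10], [5,21,23], [15,18,19], [1,12,22], [4,13,14], [1,14,18]]

/-- The arc permutation. -/
def fA : Fin 30 → Fin 30 :=
  ![8, 3, 20, 19, 26, 14, 7, 22, 27, 10, 11, 13, 28, 23, 9, 24, 12, 16, 0, 5, 25, 18, 21, 1, 2, 29, 6, 4, 15, 17]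

/-- Combined out-neighborhood (arc target plus edge neighbors). -/
def dnb (a : Fin 30) : List (Fin 30) := fA a :: nb a

def G : MixedGraph (Fin 30) where
  Edge a b := b ∈ nb a
  edge_symm := by decide
  Arc a b := fA a = b

instance : DecidableRel G.Edge := fun a b => inferInstanceAs (Decidable (b ∈ nb a))
instance : DecidableRel G.Arc := fun a b => inferInstanceAs (Decidable (fA a = b))

lemma L1 : ∀ a : Fin 30, a ∉ nb a := by decide
lemma L2 : ∀ a : Fin 30, fA a ≠ a := by decide
lemma L3 : ∀ a : Fin 30, fA a ∉ nb a := by decide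
lemma L4 : ∀ a : Fin 30, fA (fA a) ≠ a := by decide
lemma sym : ∀ a b : Fin 30, b ∈ nb a → a ∈ nb b := by decide

set_option synthInstance.maxHeartbeats 1000000 in
set_option synthInstance.maxSize 5000 in
set_option maxHeartbeats 2000000 in
lemma no3 : ∀ a : Fin 30, ∀ b ∈ dnb a, ∀ c ∈ dnb b,
    a ≠ b → a ≠ c → b ≠ c → a ∉ dnb c := by decide

set_option synthInstance.maxHeartbeats 1000000 in
set_option synthInstance.maxSize 5000 in
set_option maxHeartbeats 2000000 in
lemma no4 : ∀ a : Fin 30, ∀ b ∈ dnb a, ∀ c ∈ dnb b, ∀ d ∈ dnb c,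
    a ≠ b → a ≠ c → a ≠ d → b ≠ c → b ≠ d → c ≠ d → a ∉ dnb d := by decide

set_option synthInstance.maxHeartbeats 1000000 in
set_option synthInstance.maxSize 5000 in
set_option maxHeartbeats 2000000 in
lemma no5 : ∀ a : Fin 30, ∀ b ∈ dnb a, ∀ c ∈ dnb b, ∀ d ∈ dnb c, ∀ e ∈ dnb d,
    a ≠ b → a ≠ c → a ≠ d → a ≠ e → b ≠ c → b ≠ d → b ≠ e → c ≠ d → c ≠ e → d ≠ e →
    a ∉ dnb e := by decide

lemma step_mem {k : ℕ} (v : ZMod k → Fin 30) (isEdge : ZMod k → Bool)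
    (hstep : ∀ i, if isEdge i then G.Edge (v i) (v (i + 1)) else G.Arc (v i) (v (i + 1))) :
    ∀ i, v (i + 1) ∈ dnb (v i) := by
  intro i
  have h := hstep i
  by_cases hE : isEdge i = true
  · rw [if_pos hE] at h
    exact List.mem_cons_of_mem _ h
  · rw [if_neg hE] at h
    exact List.mem_cons.2 (Or.inl h.symm)

lemma girth6 : G.GirthGE 6 := by
  intro k hk v isEdge h
  interval_cases k
  · exact Nat.lt_irrefl 0 h.1
  · obtain ⟨-, -, hstep, -, -⟩ := h
    have h0 := hstep 0
    have e : (0 + 1 : ZMod 1) = 0 := by decide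
    rw [e] at h0
    by_cases hE : isEdge 0 = true
    · rw [if_pos hE] at h0
      exact L1 (v 0) h0
    · rw [if_neg hE] at h0
      exact L2 (v 0) h0
  · obtain ⟨-, hinj, hstep, hEE, -⟩ := h
    have h0 := hstep 0
    have h1 := hstep 1
    have e0 : (0 + 1 : ZMod 2) = 1 := by decide
    have e1 : (1 + 1 : ZMod 2) = 0 := by decide
    rw [e0] at h0
    rw [e1] at h1
    by_cases hE0 : isEdge 0 = true <;> by_cases hE1 : isEdge 1 = true
    · have hne := hEE 0 1 (by decide) hE0 hE1
      rw [e0, e1] at hne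
      exact hne (Set.pair_comm (v 0) (v 1))
    · rw [if_pos hE0] at h0
      rw [if_neg hE1] at h1
      exact L3 (v 1) (by rw [show fA (v 1) = v 0 from h1]; exact sym _ _ h0)
    · rw [if_neg hE0] at h0
      rw [if_pos hE1] at h1
      exact L3 (v 0) (by rw [show fA (v 0) = v 1 from h0]; exact sym _ _ h1)
    · rw [if_neg hE0] at h0
      rw [if_neg hE1] at h1
      exact L4 (v 0) (by rw [show fA (v 0) = v 1 from h0]; exact h1)
  · obtain ⟨-, hinj, hstep, -, -⟩ := h
    have hD := step_mem v isEdge hstep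
    have m0 := hD 0
    have m1 := hD 1
    have m2 := hD 2
    rw [show (0 + 1 : ZMod 3) = 1 from by decide] at m0
    rw [show (1 + 1 : ZMod 3) = 2 from by decide] at m1
    rw [show (2 + 1 : ZMod 3) = 0 from by decide] at m2
    exact no3 (v 0) (v 1) m0 (v 2) m1
      (hinj.ne (by decide)) (hinj.ne (by decide)) (hinj.ne (by decide)) m2
  · obtain ⟨-, hinj, hstep, -, -⟩ := h
    have hD := step_mem v isEdge hstep
    have m0 := hD 0
    have m1 := hD 1
    have m2 := hD 2
    have m3 := hD 3
    rw [show (0 + 1 : ZMod 4) = 1 from by decide] at m0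
    rw [show (1 + 1 : ZMod 4) = 2 from by decide] at m1
    rw [show (2 + 1 : ZMod 4) = 3 from by decide] at m2
    rw [show (3 + 1 : ZMod 4) = 0 from by decide] at m3
    exact no4 (v 0) (v 1) m0 (v 2) m1 (v 3) m2
      (hinj.ne (by decide)) (hinj.ne (by decide)) (hinj.ne (by decide))
      (hinj.ne (by decide)) (hinj.ne (by decide)) (hinj.ne (by decide)) m3
  · obtain ⟨-, hinj, hstep, -, -⟩ := h
    have hD := step_mem v isEdge hstep
    have m0 := hD 0
    have m1 := hD 1
    have m2 := hD 2
    have m3 := hD 3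
    have m4 := hD 4
    rw [show (0 + 1 : ZMod 5) = 1 from by decide] at m0
    rw [show (1 + 1 : ZMod 5) = 2 from by decide] at m1
    rw [show (2 + 1 : ZMod 5) = 3 from by decide] at m2
    rw [show (3 + 1 : ZMod 5) = 4 from by decide] at m3
    rw [show (4 + 1 : ZMod 5) = 0 from by decide] at m4
    exact no5 (v 0) (v 1) m0 (v 2) m1 (v 3) m2 (v 4) m3
      (hinj.ne (by decide)) (hinj.ne (by decide)) (hinj.ne (by decide))
      (hinj.ne (by decide)) (hinj.ne (by decide)) (hinj.ne (by decide))
      (hinj.ne (by decide)) (hinj.ne (by decide)) (hinj.ne (by decide))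
      (hinj.ne (by decide)) m4

/-- An explicit 6-cycle of undirected edges. -/
def cyc : ZMod 6 → Fin 30 := ![0, 17, 9, 22, 20, 13]

lemma cyc_steps : ∀ i : ZMod 6, cyc (i + 1) ∈ nb (cyc i) := by decide

lemma cyc_inj : Function.Injective cyc := by decide

lemma cyc_pairs : ∀ i j : ZMod 6, i ≠ j →
    ¬((cyc i = cyc j ∧ cyc (i + 1) = cyc (j + 1)) ∨
      (cyc i = cyc (j + 1) ∧ cyc (i + 1) = cyc j)) := by decide

lemma has6 : ∃ (v : ZMod 6 → Fin 30) (isEdge : ZMod 6 → Bool),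
    G.IsMixedCycle 6 v isEdge := by
  refine ⟨cyc, fun _ => true, by norm_num, cyc_inj, ?_, ?_, ?_⟩
  · intro i
    rw [if_pos rfl]
    exact cyc_steps i
  · intro i j hij _ _ hset
    rw [Set.pair_eq_pair_iff] at hset
    exact cyc_pairs i j hij hset
  · intro i j _ hfi
    exact Bool.noConfusion hfi

end Cage316

theorem exists_316_mixed_cage :
    ∃ (V : Type) (_ : Fintype V) (G : MixedGraph V),
      Fintype.card V = 30 ∧
      (∀ v : V, Nat.card {w : V // G.Edge v w} = 3) ∧
      (∀ v : V, Nat.card {w : V // G.Arc v w} = 1) ∧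
      (∀ v : V, Nat.card {w : V // G.Arc w v} = 1) ∧
      G.GirthGE 6 ∧
      (∃ (v : ZMod 6 → V) (isEdge : ZMod 6 → Bool), G.IsMixedCycle 6 v isEdge) := by
  refine ⟨Fin 30, inferInstance, Cage316.G, by simp, ?_, ?_, ?_, Cage316.girth6, Cage316.has6⟩
  · intro v
    rw [Nat.card_eq_fintype_card]
    revert v
    decide
  · intro v
    rw [Nat.card_eq_fintype_card]
    revert v
    decide
  · intro v
    rw [Nat.card_eq_fintype_card]
    revert v
    decide
end

section
/- In the mixed graph G on {0,1,2} × (Z/10) (arcs (i,j)→(i,j+1), edges {(0,j),(1,j)}, {(0,j),(2,j+5)}, {(1,j),(2,j+2)}, {(1,j),(2,j-2)}), there is no mixed cycle using exactly one arc and fewer than 5 edges. -/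
/- Auxiliary invariant: φ(ℓ,j) = (2j, [ℓ=1], [ℓ=2]) in ZMod 20 × ZMod 2 × ZMod 2. -/
abbrev A : Type := ZMod 20 × ZMod 2 × ZMod 2

def phi (p : MV) : A := ((2 * p.2.val : ℕ), if p.1 = 1 then 1 else 0, if p.1 = 2 then 1 else 0)

def S : Finset A := {(0,1,0), (4,1,1), (16,1,1), (10,0,1)}

lemma edge_phi : ∀ u w : MV, edgeRel u w → phi w - phi u ∈ S := by
  intro u w h
  rcases h with (⟨j,rfl,rfl⟩|⟨j,rfl,rfl⟩|⟨j,rfl,rfl⟩|⟨j,rfl,rfl⟩)|(⟨j,rfl,rfl⟩|⟨j,rfl,rfl⟩|⟨j,rfl,rfl⟩|⟨j,rfl,rfl⟩) <;>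
    revert j <;> decide

lemma arc_phi : ∀ u w : MV, arcRel u w → phi w - phi u = (2,0,0) := by
  rintro ⟨a,x⟩ ⟨b,y⟩ ⟨h1,h2⟩
  dsimp at h1 h2
  subst h1; subst h2
  revert x
  fin_cases b <;> decide

lemma key0 : ((2,0,0) : A) ≠ 0 := by decide
lemma key1 : ∀ a ∈ S, ((2,0,0) : A) + a ≠ 0 := by decide
set_option maxRecDepth 40000 in
lemma key2 : ∀ a ∈ S, ∀ b ∈ S, ((2,0,0) : A) + a + b ≠ 0 := by decide
set_option maxRecDepth 40000 in
lemma key3 : ∀ a ∈ S, ∀ b ∈ S, ∀ c ∈ S, ((2,0,0) : A) + a + b + c ≠ 0 := by decide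
set_option maxRecDepth 40000 in
lemma key4 : ∀ a ∈ S, ∀ b ∈ S, ∀ c ∈ S, ∀ d ∈ S, ((2,0,0) : A) + a + b + c + d ≠ 0 := by decide

/-- No mixed cycle of `mixedG` uses exactly one arc and fewer than five edges. -/
theorem no_cycle_one_arc_few_edges (k : ℕ) (v : ZMod k → MV)
    (isEdge : ZMod k → Bool)
    (hcyc : mixedG.IsMixedCycle k v isEdge)
    (harcs : Nat.card {i : ZMod k // isEdge i = false} = 1)
    (hedges : Nat.card {i : ZMod k // isEdge i = true} < 5) :
    False := by
  obtain ⟨hpos, -, hstep, -, -⟩ := hcyc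
  haveI : NeZero k := ⟨hpos.ne'⟩
  have hF : (Finset.univ.filter (fun i : ZMod k => isEdge i = false)).card = 1 := by
    rw [← harcs, Nat.card_eq_fintype_card, Fintype.card_subtype]
  have hT : (Finset.univ.filter (fun i : ZMod k => isEdge i = true)).card < 5 := by
    have h' : Nat.card {i : ZMod k // isEdge i = true}
        = (Finset.univ.filter (fun i : ZMod k => isEdge i = true)).card := by
      rw [Nat.card_eq_fintype_card, Fintype.card_subtype]
    rw [← h']
    exact hedges
  have hsplit := Finset.card_filter_add_card_filter_not
    (s := (Finset.univ : Finset (ZMod k))) (p := fun i => isEdge i = true)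
  simp only [Bool.not_eq_true, Finset.card_univ, ZMod.card] at hsplit
  have hk5 : k ≤ 5 := by omega
  obtain ⟨t, htt⟩ := Finset.card_eq_one.mp hF
  have ht : isEdge t = false := by
    have hmem : t ∈ Finset.univ.filter (fun i : ZMod k => isEdge i = false) := by
      rw [htt]; exact Finset.mem_singleton_self t
    exact (Finset.mem_filter.mp hmem).2
  have htrue : ∀ i, i ≠ t → isEdge i = true := by
    intro i hi
    cases hb : isEdge i with
    | true => rfl
    | false =>
      exfalso
      have hmem : i ∈ Finset.univ.filter (fun i : ZMod k => isEdge i = false) :=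
        Finset.mem_filter.mpr ⟨Finset.mem_univ _, hb⟩
      rw [htt, Finset.mem_singleton] at hmem
      exact hi hmem
  have harc : ∀ i, isEdge i = false → phi (v (i+1)) - phi (v i) = (2,0,0) := by
    intro i hi
    have h := hstep i
    rw [hi] at h
    simp only [Bool.false_eq_true, if_false] at h
    exact arc_phi _ _ h
  have hedg : ∀ i, isEdge i = true → phi (v (i+1)) - phi (v i) ∈ S := by
    intro i hi
    have h := hstep i
    rw [hi] at h
    simp only [if_true] at h
    exact edge_phi _ _ h
  clear hstep hF hT hsplit htt hedges harcs
  interval_cases k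
  · -- k = 1
    have hall : ∀ x : ZMod 1, x = 0 := by decide
    rcases hall t with rfl
    refine key0 ?_
    rw [← harc 0 ht]
    simp only [show ((0:ZMod 1) + 1) = 0 from by decide]
    abel
  · -- k = 2
    have hall : ∀ x : ZMod 2, x = 0 ∨ x = 1 := by decide
    rcases hall t with rfl | rfl
    · refine key1 _ (hedg 1 (htrue 1 (by decide))) ?_
      rw [← harc 0 ht]
      simp only [show ((0:ZMod 2) + 1) = 1 from by decide, show ((1:ZMod 2) + 1) = 0 from by decide]
      abel
    · refine key1 _ (hedg 0 (htrue 0 (by decide))) ?_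
      rw [← harc 1 ht]
      simp only [show ((0:ZMod 2) + 1) = 1 from by decide, show ((1:ZMod 2) + 1) = 0 from by decide]
      abel
  · -- k = 3
    have hall : ∀ x : ZMod 3, x = 0 ∨ x = 1 ∨ x = 2 := by decide
    rcases hall t with rfl | rfl | rfl
    · refine key2 _ (hedg 1 (htrue 1 (by decide))) _ (hedg 2 (htrue 2 (by decide))) ?_
      rw [← harc 0 ht]
      simp only [show ((0:ZMod 3) + 1) = 1 from by decide, show ((1:ZMod 3) + 1) = 2 from by decide, show ((2:ZMod 3) + 1) = 0 from by decide]
      abel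
    · refine key2 _ (hedg 0 (htrue 0 (by decide))) _ (hedg 2 (htrue 2 (by decide))) ?_
      rw [← harc 1 ht]
      simp only [show ((0:ZMod 3) + 1) = 1 from by decide, show ((1:ZMod 3) + 1) = 2 from by decide, show ((2:ZMod 3) + 1) = 0 from by decide]
      abel
    · refine key2 _ (hedg 0 (htrue 0 (by decide))) _ (hedg 1 (htrue 1 (by decide))) ?_
      rw [← harc 2 ht]
      simp only [show ((0:ZMod 3) + 1) = 1 from by decide, show ((1:ZMod 3) + 1) = 2 from by decide, show ((2:ZMod 3) + 1) = 0 from by decide]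
      abel
  · -- k = 4
    have hall : ∀ x : ZMod 4, x = 0 ∨ x = 1 ∨ x = 2 ∨ x = 3 := by decide
    rcases hall t with rfl | rfl | rfl | rfl
    · refine key3 _ (hedg 1 (htrue 1 (by decide))) _ (hedg 2 (htrue 2 (by decide))) _ (hedg 3 (htrue 3 (by decide))) ?_
      rw [← harc 0 ht]
      simp only [show ((0:ZMod 4) + 1) = 1 from by decide, show ((1:ZMod 4) + 1) = 2 from by decide, show ((2:ZMod 4) + 1) = 3 from by decide, show ((3:ZMod 4) + 1) = 0 from by decide]
      abel
    · refine key3 _ (hedg 0 (htrue 0 (by decide))) _ (hedg 2 (htrue 2 (by decide))) _ (hedg 3 (htrue 3 (by decide))) ?_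
      rw [← harc 1 ht]
      simp only [show ((0:ZMod 4) + 1) = 1 from by decide, show ((1:ZMod 4) + 1) = 2 from by decide, show ((2:ZMod 4) + 1) = 3 from by decide, show ((3:ZMod 4) + 1) = 0 from by decide]
      abel
    · refine key3 _ (hedg 0 (htrue 0 (by decide))) _ (hedg 1 (htrue 1 (by decide))) _ (hedg 3 (htrue 3 (by decide))) ?_
      rw [← harc 2 ht]
      simp only [show ((0:ZMod 4) + 1) = 1 from by decide, show ((1:ZMod 4) + 1) = 2 from by decide, show ((2:ZMod 4) + 1) = 3 from by decide, show ((3:ZMod 4) + 1) = 0 from by decide]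
      abel
    · refine key3 _ (hedg 0 (htrue 0 (by decide))) _ (hedg 1 (htrue 1 (by decide))) _ (hedg 2 (htrue 2 (by decide))) ?_
      rw [← harc 3 ht]
      simp only [show ((0:ZMod 4) + 1) = 1 from by decide, show ((1:ZMod 4) + 1) = 2 from by decide, show ((2:ZMod 4) + 1) = 3 from by decide, show ((3:ZMod 4) + 1) = 0 from by decide]
      abel
  · -- k = 5
    have hall : ∀ x : ZMod 5, x = 0 ∨ x = 1 ∨ x = 2 ∨ x = 3 ∨ x = 4 := by decide
    rcases hall t with rfl | rfl | rfl | rfl | rfl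
    · refine key4 _ (hedg 1 (htrue 1 (by decide))) _ (hedg 2 (htrue 2 (by decide))) _ (hedg 3 (htrue 3 (by decide))) _ (hedg 4 (htrue 4 (by decide))) ?_
      rw [← harc 0 ht]
      simp only [show ((0:ZMod 5) + 1) = 1 from by decide, show ((1:ZMod 5) + 1) = 2 from by decide, show ((2:ZMod 5) + 1) = 3 from by decide, show ((3:ZMod 5) + 1) = 4 from by decide, show ((4:ZMod 5) + 1) = 0 from by decide]
      abel
    · refine key4 _ (hedg 0 (htrue 0 (by decide))) _ (hedg 2 (htrue 2 (by decide))) _ (hedg 3 (htrue 3 (by decide))) _ (hedg 4 (htrue 4 (by decide))) ?_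
      rw [← harc 1 ht]
      simp only [show ((0:ZMod 5) + 1) = 1 from by decide, show ((1:ZMod 5) + 1) = 2 from by decide, show ((2:ZMod 5) + 1) = 3 from by decide, show ((3:ZMod 5) + 1) = 4 from by decide, show ((4:ZMod 5) + 1) = 0 from by decide]
      abel
    · refine key4 _ (hedg 0 (htrue 0 (by decide))) _ (hedg 1 (htrue 1 (by decide))) _ (hedg 3 (htrue 3 (by decide))) _ (hedg 4 (htrue 4 (by decide))) ?_
      rw [← harc 2 ht]
      simp only [show ((0:ZMod 5) + 1) = 1 from by decide, show ((1:ZMod 5) + 1) = 2 from by decide, show ((2:ZMod 5) + 1) = 3 from by decide, show ((3:ZMod 5) + 1) = 4 from by decide, show ((4:ZMod 5) + 1) = 0 from by decide]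
      abel
    · refine key4 _ (hedg 0 (htrue 0 (by decide))) _ (hedg 1 (htrue 1 (by decide))) _ (hedg 2 (htrue 2 (by decide))) _ (hedg 4 (htrue 4 (by decide))) ?_
      rw [← harc 3 ht]
      simp only [show ((0:ZMod 5) + 1) = 1 from by decide, show ((1:ZMod 5) + 1) = 2 from by decide, show ((2:ZMod 5) + 1) = 3 from by decide, show ((3:ZMod 5) + 1) = 4 from by decide, show ((4:ZMod 5) + 1) = 0 from by decide]
      abel
    · refine key4 _ (hedg 0 (htrue 0 (by decide))) _ (hedg 1 (htrue 1 (by decide))) _ (hedg 2 (htrue 2 (by decide))) _ (hedg 3 (htrue 3 (by decide))) ?_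
      rw [← harc 4 ht]
      simp only [show ((0:ZMod 5) + 1) = 1 from by decide, show ((1:ZMod 5) + 1) = 2 from by decide, show ((2:ZMod 5) + 1) = 3 from by decide, show ((3:ZMod 5) + 1) = 4 from by decide, show ((4:ZMod 5) + 1) = 0 from by decide]
      abel
end
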